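/- Let κ be an uncountable regular cardinal and let T be a κ-Kurepa subtree of ^{<κ}κ. Assume that either κ is not inaccessible or T is stationary slim. If the set [T] is a retract of ^κκ, then [T] contains an isolated point. -/

import Mathlib

open Cardinal Set

noncomputable section

namespace GBaire

universe u

/-- The underlying well-ordered set of the cardinal `κ`, i.e. the type of ordinals `< κ`. -/
abbrev K (κ : Cardinal.{u}) : Type u := κ.ord.ToType

/-- The set `^{<κ}κ` of all functions from a proper initial segment of `κ` to `κ`. -/
abbrev PreFun (κ : Cardinal.{u}) : Type u := Σ α : K κ, ({β : K κ // β < α} → K κ)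

variable (κ : Cardinal.{u})

/-- The restriction `x ↾ α` of a function `x ∈ ^κκ` to the initial segment determined by `α`. -/
def resT (x : K κ → K κ) (α : K κ) : PreFun κ := ⟨α, fun β => x β.1⟩

/-- The restriction of `s ∈ ^{<κ}κ` to (the minimum of its domain and) `γ`.  When
`γ ≤ s.1` this is the restriction `s ↾ γ`; otherwise it equals `s`. -/
def cut (s : PreFun κ) (γ : K κ) : PreFun κ :=
  ⟨min γ s.1, fun β => s.2 ⟨β.1, lt_of_lt_of_le β.2 (min_le_right _ _)⟩⟩

/-- A subtree of `^{<κ}κ`: a set of elements of `^{<κ}κ` closed under restrictions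
to smaller ordinals. -/
def IsSubtree (T : Set (PreFun κ)) : Prop :=
  ∀ s ∈ T, ∀ γ : K κ, γ < s.1 → cut κ s γ ∈ T

/-- The `α`-th level `T(α)` of `T`. -/
def level (T : Set (PreFun κ)) (α : K κ) : Set (PreFun κ) := {s ∈ T | s.1 = α}

/-- The set `[T]` of cofinal branches of `T`, i.e. all `x ∈ ^κκ` all of whose
restrictions lie in `T`. -/
def branches (T : Set (PreFun κ)) : Set (K κ → K κ) := {x | ∀ α : K κ, resT κ x α ∈ T}

/-- `T` is a `κ`-Kurepa subtree of `^{<κ}κ`: a subtree all of whose levels are nonempty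
of cardinality `< κ` and with at least `κ⁺` many cofinal branches. -/
def IsKurepa (T : Set (PreFun κ)) : Prop :=
  IsSubtree κ T ∧ (∀ α : K κ, (level κ T α).Nonempty ∧ #(level κ T α) < κ) ∧
    Order.succ κ ≤ #(branches κ T)

/-- The basic open set `N_s = {x ∈ ^κκ | s ⊆ x}`. -/
def Nbhd (s : PreFun κ) : Set (K κ → K κ) := {x | resT κ x s.1 = s}

/-- The topology of the generalized Baire space `^κκ`, generated by the sets `N_s`. -/
def baire : TopologicalSpace (K κ → K κ) :=
  TopologicalSpace.generateFrom {U | ∃ s : PreFun κ, U = Nbhd κ s}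

/-- `X` is a continuous image of `^κκ`: there is a continuous surjection from `^κκ`
onto `X` (with the subspace topology). -/
def IsContImage (X : Set (K κ → K κ)) : Prop :=
  letI := baire κ
  ∃ f : (K κ → K κ) → X, Continuous f ∧ Function.Surjective f

/-- `X` is a retract of `^κκ`: there is a continuous `r : ^κκ → ^κκ` with range
contained in `X` that is the identity on `X`. -/
def IsRetract (X : Set (K κ → K κ)) : Prop :=
  letI := baire κ
  ∃ r : (K κ → K κ) → (K κ → K κ),
    Continuous r ∧ Set.range r ⊆ X ∧ ∀ x ∈ X, r x = x

/-- `y` is an isolated point of `Y ⊆ ^κκ`. -/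
def IsIsolatedIn (Y : Set (K κ → K κ)) (y : K κ → K κ) : Prop :=
  y ∈ Y ∧ ∃ α : K κ, Nbhd κ (resT κ y α) ∩ Y = {y}

/-- `T` is slim: `|T(α)| ≤ |α|` for all sufficiently large `α < κ`. -/
def IsSlim (T : Set (PreFun κ)) : Prop :=
  ∃ α₀ : K κ, ∀ α : K κ, α₀ ≤ α → #(level κ T α) ≤ #{β : K κ // β < α}

/-- `C ⊆ κ` is closed: it contains every least upper bound of a nonempty subset of `C`. -/
def ClosedIn (C : Set (K κ)) : Prop :=
  ∀ A ⊆ C, A.Nonempty → ∀ x : K κ, IsLUB A x → x ∈ C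

/-- `C ⊆ κ` is unbounded in `κ`. -/
def UnboundedIn (C : Set (K κ)) : Prop := ∀ x : K κ, ∃ y ∈ C, x < y

/-- `S ⊆ κ` is stationary in `κ`: it meets every closed unbounded subset of `κ`. -/
def Stationary (S : Set (K κ)) : Prop :=
  ∀ C : Set (K κ), ClosedIn κ C → UnboundedIn κ C → (S ∩ C).Nonempty

/-- `T` is stationary slim: `|T(α)| ≤ |α|` for stationarily many `α < κ`. -/
def StatSlim (T : Set (PreFun κ)) : Prop :=
  Stationary κ {α : K κ | #(level κ T α) ≤ #{β : K κ // β < α}}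

/-- `α` is a limit ordinal (as an element of `κ`): it is neither the least element
nor a successor. -/
def IsLimitElt (α : K κ) : Prop :=
  (∃ β : K κ, β < α) ∧ ∀ β : K κ, β < α → ∃ γ : K κ, β < γ ∧ γ < α

/-- The boundary `∂T` of a subtree `T`: the minimal elements of `^{<κ}κ \ T`. -/
def boundary (T : Set (PreFun κ)) : Set (PreFun κ) :=
  {t | t ∉ T ∧ ∀ γ : K κ, γ < t.1 → cut κ t γ ∈ T}

/-- `T` is superthin: for every limit ordinal `α < κ`, the set of elements of
`T ∪ ∂T` with domain `α` has cardinality `< κ`. -/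
def IsSuperthin (T : Set (PreFun κ)) : Prop :=
  ∀ α : K κ, IsLimitElt κ α → #{s ∈ T ∪ boundary κ T | s.1 = α} < κ

/-- `T` is pruned: every element of `T` has a proper extension in `T`. -/
def IsPruned (T : Set (PreFun κ)) : Prop :=
  ∀ s ∈ T, ∃ t ∈ T, s.1 < t.1 ∧ cut κ t s.1 = s

/-- `T` is `<κ`-closed: the union of every (strictly increasing with respect to proper
end-extension) sequence of elements of `T` indexed by an ordinal `< κ` again lies in `T`.
Here `u` is the union of the sequence `s` iff the domain of `u` is the least upper bound
of the domains of the `s ξ` and every `s ξ` is a restriction of `u`. -/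
def IsLtClosed (T : Set (PreFun κ)) : Prop :=
  ∀ (γ : K κ) (s : {ξ : K κ // ξ < γ} → PreFun κ),
    (∀ ξ ζ : {ξ : K κ // ξ < γ}, ξ < ζ → (s ξ).1 < (s ζ).1 ∧ cut κ (s ζ) (s ξ).1 = s ξ) →
    (∀ ξ, s ξ ∈ T) →
    ∀ u : PreFun κ, IsLUB (Set.range fun ξ => (s ξ).1) u.1 →
      (∀ ξ, cut κ u (s ξ).1 = s ξ) → u ∈ T

/-- `T` contains a Cantor subtree. -/
def HasCantorSubtree (T : Set (PreFun κ)) : Prop :=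
  ∃ (l : ℕ → K κ) (lam : K κ), StrictMono l ∧ IsLUB (Set.range l) lam ∧
    (level κ T lam).Nonempty ∧
    ∃ B ⊆ level κ T lam, ¬ B.Countable ∧
      ∀ n : ℕ, ((fun t => cut κ t (l n)) '' B).Countable

/-- proper end-extension on `^{<κ}κ`. -/
def pext (s t : PreFun κ) : Prop := s.1 < t.1 ∧ cut κ t s.1 = s

/-- A set `A ⊆ ^{<κ}κ`, regarded as a tree under proper end-extension, is trivially
coherent: it is order-isomorphic to a subtree of `^{<λ}2` (for `λ` its height) all of
whose elements `t` satisfy that `t⁻¹{0}` is finite.  (Here the comparison tree is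
realized as a subtree `U` of `^{<κ}κ` taking only the values `0` and `1`, i.e. values
with at most one predecessor, such that each `u ∈ U` takes the value `0`, i.e. the
value with no predecessor, only finitely often.) -/
def TriviallyCoherent (A : Set (PreFun κ)) : Prop :=
  ∃ U : Set (PreFun κ),
    IsSubtree κ U ∧
    (∀ u ∈ U, ∀ β : {b : K κ // b < u.1}, #{γ : K κ // γ < u.2 β} ≤ 1) ∧
    (∀ u ∈ U, {β : {b : K κ // b < u.1} | ¬ ∃ γ : K κ, γ < u.2 β}.Finite) ∧
    ∃ f : A → U, Function.Bijective f ∧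
      ∀ s t : A, pext κ s.1 t.1 ↔ pext κ (f s).1 (f t).1

/-- `T` is locally coherent: each of its proper initial segments `T ∩ ^{<α}κ` is
trivially coherent. -/
def LocallyCoherent (T : Set (PreFun κ)) : Prop :=
  ∀ α : K κ, TriviallyCoherent κ {s ∈ T | s.1 < α}

end GBaire

/-!
Suppose `r` retracts `^κκ` onto `[T]` and `[T]` has no isolated points. Call a node `x ↾ β`
stable if `r` maps `N_{x ↾ β}` into itself. Continuity of `r` makes every point of `[T]` stable
at cofinally many levels (close off a modulus of continuity under `ω` iterations), so, as no
point of `[T]` is isolated, every stable node has two incompatible stable extensions. Stability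
also survives unions of coherent families of fewer than `κ` nodes. Splitting at successor stages
and taking unions at limits gives stable nodes `t_σ` for `σ ∈ 2^{<κ}`, and for `σ ∈ 2^α` the
point `r(t_σ)` is a branch of `T` through every `t_{σ ↾ ξ}`. Hence `2^|α| ≤ |T(δ)|` as soon as
all the `t_{σ ↾ ξ}` with `ξ < α` have length at most `δ`.

If `κ` is not inaccessible, let `μ` be least with `κ ≤ 2^μ`; the nodes below stage `μ` are then
fewer than `κ`, hence bounded by some `δ < κ`, and `κ ≤ |T(δ)|` contradicts `|T(δ)| < κ`. If `κ`
is inaccessible, the closure points `δ` of the length bounds form a club, which meets the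
stationary set of `δ` with `|T(δ)| ≤ |δ|`, contradicting `|δ| < 2^|δ|`.
-/

open Topology

lemma IsLUB.eqOn_Iio {α β : Type*} [LinearOrder α] {A : Set α} {δ : α} (h : IsLUB A δ)
    {x y : α → β} (hA : ∀ a ∈ A, EqOn x y (Iio a)) : EqOn x y (Iio δ) := fun _ hγ =>
  let ⟨a, ha, hγa, _⟩ := h.exists_between hγ
  hA a ha hγa

lemma BddAbove.exists_isLUB_of_wellFoundedLT {α : Type*} [LinearOrder α] [WellFoundedLT α]
    {s : Set α} (hs : BddAbove s) : ∃ x, IsLUB s x :=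
  ⟨wellFounded_lt.min _ hs, wellFounded_lt.min_mem _ hs, fun _ hy => wellFounded_lt.min_le hy⟩

lemma Cardinal.mk_Iic_lt_of_mk_Iio_lt {α : Type u} [PartialOrder α] {c : Cardinal.{u}}
    (hc : ℵ₀ ≤ c) {a : α} (ha : #(Iio a) < c) : #(Iic a) < c := by
  rw [← Iio_insert]
  exact mk_insert_le.trans_lt (add_lt_of_lt hc ha (one_lt_aleph0.trans_le hc))

namespace GBaire

variable {κ : Cardinal.{u}}

lemma mk_Iio_K_lt (β : K κ) : #(Iio β) < κ := by
  simpa using Cardinal.mk_Iio_lt β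

lemma bddAbove_of_mk_lt (hreg : κ.IsRegular) {s : Set (K κ)} (hs : #s < κ) : BddAbove s :=
  .of_not_isCofinal fun h => (Order.cof_le h).not_gt <| by
    rwa [Ordinal.cof_toType, hreg.cof_ord]

lemma bddAbove_range_Iio (hreg : κ.IsRegular) {β : K κ} (f : Iio β → K κ) : BddAbove (range f) :=
  bddAbove_of_mk_lt hreg (mk_range_le.trans_lt (mk_Iio_K_lt β))

lemma exists_gt_forall_lt_exists_apply_le (hκ : ℵ₀ < κ) (hreg : κ.IsRegular) {F : K κ → K κ}
    (hF : ∀ a, a < F a) (x : K κ) : ∃ δ, x < δ ∧ ∀ ξ < δ, ∃ a, ξ < a ∧ F a ≤ δ := by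
  have hbdd : BddAbove (range fun n => F^[n] x) :=
    bddAbove_of_mk_lt hreg ((mk_le_aleph0_iff.2 (countable_range _).to_subtype).trans_lt hκ)
  obtain ⟨δ, hδ⟩ := hbdd.exists_isLUB_of_wellFoundedLT
  refine ⟨δ, (hF x).trans_le (hδ.1 ⟨1, rfl⟩), fun ξ hξ => ?_⟩
  obtain ⟨_, ⟨n, rfl⟩, hξn, -⟩ := hδ.exists_between hξ
  exact ⟨_, hξn, hδ.1 ⟨n + 1, Function.iterate_succ_apply' F n x⟩⟩

lemma closedIn_setOf_forall_lt_le (g : K κ → K κ) : ClosedIn κ {δ | ∀ ξ < δ, g ξ ≤ δ} := by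
  intro A hA _ x hx ξ hξ
  obtain ⟨a, ha, hξa, hax⟩ := hx.exists_between hξ
  exact (hA ha ξ hξa).trans hax

lemma unboundedIn_setOf_forall_lt_le (hκ : ℵ₀ < κ) (hreg : κ.IsRegular) (g : K κ → K κ) :
    UnboundedIn κ {δ | ∀ ξ < δ, g ξ ≤ δ} := by
  have := Cardinal.noMaxOrder hκ.le
  have step : ∀ z : K κ, ∃ w, z < w ∧ ∀ ξ < z, g ξ ≤ w := by
    intro z
    obtain ⟨b, hb⟩ := bddAbove_range_Iio hreg fun ξ : Iio z => g ξ
    obtain ⟨w, hw⟩ := exists_gt (max z b)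
    exact ⟨w, (le_max_left _ _).trans_lt hw,
      fun ξ hξ => (hb ⟨⟨ξ, hξ⟩, rfl⟩).trans ((le_max_right _ _).trans hw.le)⟩
  choose F hlt hle using step
  intro x
  obtain ⟨δ, hxδ, hδ⟩ := exists_gt_forall_lt_exists_apply_le hκ hreg hlt x
  refine ⟨δ, fun ξ hξ => ?_, hxδ⟩
  obtain ⟨a, hξa, hFa⟩ := hδ ξ hξ
  exact (hle a ξ hξa).trans hFa

lemma two_pow_mk_Iic_lt (hin : κ.IsInaccessible) (β : K κ) : 2 ^ #(Iic β) < κ :=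
  hin.isStrongPrelimit (mk_Iic_lt_of_mk_Iio_lt hin.aleph0_lt.le (mk_Iio_K_lt β))

lemma exists_mk_Iio_eq {μ : Cardinal.{u}} (hμ : μ < κ) :
    ∃ α : K κ, #(Iio α) = μ ∧ ∀ ξ < α, #(Iio ξ) < μ := by
  let a : Iio κ.ord := ⟨μ.ord, ord_lt_ord.2 hμ⟩
  have hmk : ∀ ξ : K κ, #(Iio ξ) = (Ordinal.ToType.mk.symm ξ : Ordinal).card := fun _ => rfl
  refine ⟨Ordinal.ToType.mk a, by rw [hmk, OrderIso.symm_apply_apply, card_ord], fun ξ hξ => ?_⟩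
  rw [hmk, ← lt_ord]
  have := Ordinal.ToType.mk.symm.lt_iff_lt.2 hξ
  rwa [OrderIso.symm_apply_apply] at this

/-- `α` has cardinality the least `μ` with `κ ≤ 2 ^ μ`. -/
lemma exists_le_two_pow_mk_Iio (hκ : ℵ₀ < κ) (hreg : κ.IsRegular) (hin : ¬ κ.IsInaccessible) :
    ∃ α : K κ, κ ≤ 2 ^ #(Iio α) ∧ ∀ ξ < α, 2 ^ #(Iic ξ) < κ := by
  have hnot : ¬ IsStrongPrelimit κ := fun hs => hin ⟨hκ, hreg.cof_ord.ge, hs⟩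
  obtain ⟨μ, ⟨hμκ, hκμ⟩, hmin⟩ :=
    wellFounded_lt.has_min {μ | μ < κ ∧ κ ≤ 2 ^ μ} (not_isStrongPrelimit_iff.1 hnot)
  have hμ : ℵ₀ ≤ μ := by
    by_contra! hμ
    exact ((power_lt_aleph0 ofNat_lt_aleph0 hμ).trans hκ).not_ge hκμ
  obtain ⟨α, hαμ, hα⟩ := exists_mk_Iio_eq hμκ
  refine ⟨α, hαμ ▸ hκμ, fun ξ hξ => ?_⟩
  have hξμ : #(Iic ξ) < μ := mk_Iic_lt_of_mk_Iio_lt hμ (hα ξ hξ)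
  by_contra! hle
  exact hmin _ ⟨hξμ.trans hμκ, hle⟩ hξμ

lemma resT_eq_resT_iff {x y : K κ → K κ} {β : K κ} :
    resT κ x β = resT κ y β ↔ EqOn x y (Iio β) := by
  simp [resT, funext_iff, EqOn]

/-- The node `⟨β, x⟩` stands for `x ↾ β ∈ ^{<κ}κ`, and `cyl` for the basic open set `N_{x ↾ β}`;
keeping a total representative `x` avoids dependent types when gluing nodes. -/
structure Node (κ : Cardinal.{u}) where
  height : K κ
  point : K κ → K κ

namespace Node

def cyl (n : Node κ) : Set (K κ → K κ) := {z | EqOn z n.point (Iio n.height)}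

lemma point_mem_cyl (n : Node κ) : n.point ∈ n.cyl := eqOn_refl _ _

lemma cyl_eq_nbhd (n : Node κ) : n.cyl = Nbhd κ (resT κ n.point n.height) := by
  ext z
  exact resT_eq_resT_iff.symm

lemma cyl_anti {x : K κ → K κ} {α β : K κ} (h : α ≤ β) :
    (⟨β, x⟩ : Node κ).cyl ⊆ (⟨α, x⟩ : Node κ).cyl := fun _ hz => hz.mono (Iio_subset_Iio h)

lemma mem_cyl_of_mem_cyl {x : K κ → K κ} {n m : Node κ} (hx : x ∈ m.cyl) (hm : m.point ∈ n.cyl)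
    (hle : n.height ≤ m.height) : x ∈ n.cyl := fun _ hγ =>
  (hx (hγ.trans_le hle)).trans (hm hγ)

end Node

lemma exists_cyl_subset_of_isOpen [Nonempty (K κ)] {U : Set (K κ → K κ)}
    (hU : IsOpen[baire κ] U) {w : K κ → K κ} (hw : w ∈ U) : ∃ β, (⟨β, w⟩ : Node κ).cyl ⊆ U := by
  induction hU generalizing w with
  | basic V hV =>
    obtain ⟨s, rfl⟩ := hV
    refine ⟨s.1, fun z hz => ?_⟩
    rwa [Node.cyl_eq_nbhd, show resT κ w s.1 = s from hw] at hz
  | univ => exact ⟨Classical.arbitrary _, subset_univ _⟩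
  | inter V W _ _ ihV ihW =>
    obtain ⟨β₁, h₁⟩ := ihV hw.1
    obtain ⟨β₂, h₂⟩ := ihW hw.2
    exact ⟨max β₁ β₂, fun z hz => ⟨h₁ (Node.cyl_anti (le_max_left _ _) hz),
      h₂ (Node.cyl_anti (le_max_right _ _) hz)⟩⟩
  | sUnion S _ ih =>
    obtain ⟨V, hVS, hwV⟩ := hw
    obtain ⟨β, hβ⟩ := ih V hVS hwV
    exact ⟨β, hβ.trans (subset_sUnion_of_mem hVS)⟩

variable {r : (K κ → K κ) → (K κ → K κ)}

lemma exists_mapsTo_cyl_of_continuous [Nonempty (K κ)] (hr : Continuous[baire κ, baire κ] r)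
    (x : K κ → K κ) (α : K κ) : ∃ β, MapsTo r (⟨β, x⟩ : Node κ).cyl (⟨α, r x⟩ : Node κ).cyl := by
  have hopen : IsOpen[baire κ] (r ⁻¹' (⟨α, r x⟩ : Node κ).cyl) := by
    rw [Node.cyl_eq_nbhd]
    exact (@continuous_def _ _ (baire κ) (baire κ) r).1 hr _ (.basic _ ⟨_, rfl⟩)
  exact exists_cyl_subset_of_isOpen hopen (Node.point_mem_cyl ⟨α, r x⟩)

namespace Node

variable (r) in
def IsStable (n : Node κ) : Prop := MapsTo r n.cyl n.cyl

def Separated (n m : Node κ) : Prop :=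
  ∃ γ, γ < n.height ∧ γ < m.height ∧ n.point γ ≠ m.point γ

lemma Separated.symm {n m : Node κ} (h : n.Separated m) : m.Separated n :=
  let ⟨γ, hn, hm, hne⟩ := h
  ⟨γ, hm, hn, hne.symm⟩

lemma Separated.not_eqOn {n m : Node κ} (h : n.Separated m) {x y : K κ → K κ} (hx : x ∈ n.cyl)
    (hy : y ∈ m.cyl) {δ : K κ} (hδ : n.height ≤ δ) : ¬ EqOn x y (Iio δ) := fun hxy =>
  let ⟨_, hn, hm, hne⟩ := h
  hne ((hx hn).symm.trans ((hxy (hn.trans_le hδ)).trans (hy hm)))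

lemma isStable_of_isLUB {ι : Type*} {n : Node κ} {s : ι → Node κ}
    (hlub : IsLUB (range fun i => (s i).height) n.height) (hmem : ∀ i, n.point ∈ (s i).cyl)
    (hs : ∀ i, (s i).IsStable r) : n.IsStable r := by
  intro z hz
  refine hlub.eqOn_Iio ?_
  rintro _ ⟨i, rfl⟩
  have hzi : z ∈ (s i).cyl := mem_cyl_of_mem_cyl hz (hmem i) (hlub.1 ⟨i, rfl⟩)
  exact (hs i hzi).trans (hmem i).symm

end Node

lemma exists_isStable_gt (hκ : ℵ₀ < κ) (hreg : κ.IsRegular) (hr : Continuous[baire κ, baire κ] r)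
    {y : K κ → K κ} (hy : r y = y) (α : K κ) : ∃ β, α < β ∧ (⟨β, y⟩ : Node κ).IsStable r := by
  have : Nonempty (K κ) := ⟨α⟩
  have := Cardinal.noMaxOrder hκ.le
  have step : ∀ a, ∃ b, a < b ∧ MapsTo r (⟨b, y⟩ : Node κ).cyl (⟨a, y⟩ : Node κ).cyl := by
    intro a
    obtain ⟨b, hb⟩ := exists_mapsTo_cyl_of_continuous hr y a
    obtain ⟨c, hc⟩ := exists_gt (max a b)
    rw [hy] at hb
    exact ⟨c, (le_max_left _ _).trans_lt hc,
      hb.mono_left (Node.cyl_anti ((le_max_right _ _).trans hc.le))⟩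
  choose f hlt hmaps using step
  obtain ⟨δ, hαδ, hδ⟩ := exists_gt_forall_lt_exists_apply_le hκ hreg hlt α
  refine ⟨δ, hαδ, fun z hz ξ hξ => ?_⟩
  obtain ⟨a, hξa, hfa⟩ := hδ ξ hξ
  exact hmaps a (Node.cyl_anti hfa hz) hξa

variable (r) in
def IsSplitting (n : Node κ) (f : Bool → Node κ) : Prop :=
  (∀ b, (f b).IsStable r ∧ (f b).point ∈ n.cyl) ∧ (f true).Separated (f false)

variable (r) in
def StableNodesSplit : Prop := ∀ n : Node κ, n.IsStable r → ∃ f, IsSplitting r n f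

lemma exists_ne_mem_cyl {Y : Set (K κ → K κ)} {y : K κ → K κ} (hy : y ∈ Y)
    (hiso : ¬ IsIsolatedIn κ Y y) (β : K κ) : ∃ y' ∈ Y, y' ≠ y ∧ y' ∈ (⟨β, y⟩ : Node κ).cyl := by
  by_contra! h
  refine hiso ⟨hy, β, ?_⟩
  rw [← Node.cyl_eq_nbhd ⟨β, y⟩]
  exact eq_singleton_iff_unique_mem.2
    ⟨⟨Node.point_mem_cyl _, hy⟩, fun z hz => by_contra fun hne => h z hz.2 hne hz.1⟩

lemma stableNodesSplit_of_forall_not_isIsolatedIn (hκ : ℵ₀ < κ) (hreg : κ.IsRegular)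
    {Y : Set (K κ → K κ)} (hr : Continuous[baire κ, baire κ] r) (hrange : range r ⊆ Y)
    (hid : ∀ y ∈ Y, r y = y) (hniso : ∀ y, ¬ IsIsolatedIn κ Y y) : StableNodesSplit r := by
  intro n hn
  set y := r n.point
  have hyY : y ∈ Y := hrange ⟨_, rfl⟩
  have hyn : y ∈ n.cyl := hn n.point_mem_cyl
  obtain ⟨y', hy'Y, hne, hy'⟩ := exists_ne_mem_cyl hyY (hniso y) n.height
  obtain ⟨γ, hγ⟩ := Function.ne_iff.1 hne
  obtain ⟨β₀, hγβ₀, hst₀⟩ := exists_isStable_gt hκ hreg hr (hid y hyY) γ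
  obtain ⟨β₁, hγβ₁, hst₁⟩ := exists_isStable_gt hκ hreg hr (hid y' hy'Y) γ
  refine ⟨fun b => if b then ⟨β₀, y⟩ else ⟨β₁, y'⟩, fun b => ?_, γ, hγβ₀, hγβ₁, hγ.symm⟩
  cases b
  · exact ⟨hst₁, hy'.trans hyn⟩
  · exact ⟨hst₀, hyn⟩

namespace Node

open Classical in
/-- The union of the family `s`. The fallback height `β` is never used (`isLUB_glue_height`);
the values of the point above all heights are irrelevant. -/
noncomputable def glue {β : K κ} (s : Iio β → Node κ) : Node κ where
  height := if h : ∃ δ, IsLUB (range fun ξ => (s ξ).height) δ then h.choose else β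
  point γ := if h : ∃ ξ, γ < (s ξ).height then (s h.choose).point γ else γ

lemma isLUB_glue_height (hreg : κ.IsRegular) {β : K κ} (s : Iio β → Node κ) :
    IsLUB (range fun ξ => (s ξ).height) (glue s).height := by
  have h := (bddAbove_range_Iio hreg fun ξ => (s ξ).height).exists_isLUB_of_wellFoundedLT
  simp only [glue, dif_pos h]
  exact h.choose_spec

lemma glue_point_mem_cyl {β : K κ} {s : Iio β → Node κ}
    (hs : ∀ ξ ζ, ξ < ζ → (s ζ).point ∈ (s ξ).cyl) (ξ : Iio β) : (glue s).point ∈ (s ξ).cyl := by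
  intro γ hγ
  have h : ∃ ζ, γ < (s ζ).height := ⟨ξ, hγ⟩
  simp only [glue, dif_pos h]
  rcases lt_trichotomy h.choose ξ with hlt | heq | hgt
  · exact (hs _ _ hlt h.choose_spec).symm
  · rw [heq]
  · exact hs _ _ hgt hγ

variable (r) in
open Classical in
noncomputable def split (n : Node κ) : Bool → Node κ :=
  if h : ∃ f, IsSplitting r n f then h.choose else fun _ => n

lemma isSplitting_split {n : Node κ} (h : ∃ f, IsSplitting r n f) :
    IsSplitting r n (n.split r) := by
  rw [split, dif_pos h]
  exact h.choose_spec

end Node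

variable (r) in
/-- The node `t_{σ ↾ (β + 1)}` of the binary tree of stable nodes. -/
noncomputable def node (σ : K κ → Bool) : K κ → Node κ :=
  wellFounded_lt.fix fun β ih => (Node.glue fun ξ : Iio β => ih ξ ξ.2).split r (σ β)

variable (r) in
/-- The node `t_{σ ↾ β}`: the union of the nodes at the earlier stages. -/
noncomputable def gluedNode (σ : K κ → Bool) (β : K κ) : Node κ :=
  Node.glue fun ξ : Iio β => node r σ ξ

lemma node_eq (σ : K κ → Bool) (β : K κ) : node r σ β = (gluedNode r σ β).split r (σ β) :=
  wellFounded_lt.fix_eq _ _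

lemma node_congr {σ σ' : K κ → Bool} {β : K κ} (h : EqOn σ σ' (Iic β)) :
    node r σ β = node r σ' β := by
  induction β using WellFoundedLT.induction with
  | ind β ih =>
  have hglued : gluedNode r σ β = gluedNode r σ' β :=
    congrArg Node.glue (funext fun ξ => ih ξ ξ.2 (h.mono (Iic_subset_Iic.2 ξ.2.le)))
  rw [node_eq, node_eq, hglued, h self_mem_Iic]

lemma gluedNode_congr {σ σ' : K κ → Bool} {β : K κ} (h : EqOn σ σ' (Iio β)) :
    gluedNode r σ β = gluedNode r σ' β :=
  congrArg Node.glue (funext fun ξ => node_congr (h.mono (Iic_subset_Iio.2 ξ.2)))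

lemma isLUB_gluedNode_height (hreg : κ.IsRegular) (σ : K κ → Bool) (β : K κ) :
    IsLUB (range fun ξ : Iio β => (node r σ ξ).height) (gluedNode r σ β).height :=
  Node.isLUB_glue_height hreg _

lemma gluedNode_isStable_and_mem_cyl_of_forall_lt (hreg : κ.IsRegular) {σ : K κ → Bool} {β : K κ}
    (h : ∀ ξ < β, (node r σ ξ).IsStable r ∧ ∀ ζ < ξ, (node r σ ξ).point ∈ (node r σ ζ).cyl) :
    (gluedNode r σ β).IsStable r ∧ ∀ ξ < β, (gluedNode r σ β).point ∈ (node r σ ξ).cyl := by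
  have hmem := Node.glue_point_mem_cyl fun (ξ ζ : Iio β) hξζ => (h ζ ζ.2).2 ξ hξζ
  exact ⟨Node.isStable_of_isLUB (isLUB_gluedNode_height hreg σ β) hmem fun ξ => (h ξ ξ.2).1,
    fun ξ hξ => hmem ⟨ξ, hξ⟩⟩

lemma node_isStable_and_mem_cyl (hreg : κ.IsRegular) (hsplit : StableNodesSplit r)
    (σ : K κ → Bool) (β : K κ) :
    (node r σ β).IsStable r ∧ ∀ ξ < β, (node r σ β).point ∈ (node r σ ξ).cyl := by
  induction β using WellFoundedLT.induction with
  | ind β ih =>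
  obtain ⟨hglued, hmem⟩ := gluedNode_isStable_and_mem_cyl_of_forall_lt hreg ih
  obtain ⟨hst, hsub⟩ := (Node.isSplitting_split (hsplit _ hglued)).1 (σ β)
  rw [node_eq]
  exact ⟨hst, fun ξ hξ => Node.mem_cyl_of_mem_cyl hsub (hmem ξ hξ)
    ((isLUB_gluedNode_height hreg σ β).1 ⟨⟨ξ, hξ⟩, rfl⟩)⟩

lemma gluedNode_isStable_and_mem_cyl (hreg : κ.IsRegular) (hsplit : StableNodesSplit r)
    (σ : K κ → Bool) (β : K κ) :
    (gluedNode r σ β).IsStable r ∧ ∀ ξ < β, (gluedNode r σ β).point ∈ (node r σ ξ).cyl :=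
  gluedNode_isStable_and_mem_cyl_of_forall_lt hreg fun ξ _ =>
    node_isStable_and_mem_cyl hreg hsplit σ ξ

lemma apply_gluedNode_mem_cyl (hreg : κ.IsRegular) (hsplit : StableNodesSplit r)
    {σ : K κ → Bool} {ξ β : K κ} (hξ : ξ < β) : r (gluedNode r σ β).point ∈ (node r σ ξ).cyl :=
  let h := gluedNode_isStable_and_mem_cyl hreg hsplit σ β
  Node.mem_cyl_of_mem_cyl (h.1 (Node.point_mem_cyl _)) (h.2 ξ hξ)
    ((isLUB_gluedNode_height hreg σ β).1 ⟨⟨ξ, hξ⟩, rfl⟩)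

lemma node_separated (hreg : κ.IsRegular) (hsplit : StableNodesSplit r) {σ σ' : K κ → Bool}
    {β : K κ} (h : EqOn σ σ' (Iio β)) (hβ : σ β ≠ σ' β) :
    (node r σ β).Separated (node r σ' β) := by
  have hsep := (Node.isSplitting_split
    (hsplit _ (gluedNode_isStable_and_mem_cyl hreg hsplit σ β).1)).2
  rw [node_eq, node_eq, ← gluedNode_congr h]
  revert hβ
  cases σ β <;> cases σ' β <;> intro hβ
  exacts [absurd rfl hβ, hsep.symm, hsep, absurd rfl hβ]

lemma exists_node_separated (hreg : κ.IsRegular) (hsplit : StableNodesSplit r)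
    {σ σ' : K κ → Bool} {α : K κ} (h : ¬ EqOn σ σ' (Iio α)) :
    ∃ γ < α, (node r σ γ).Separated (node r σ' γ) := by
  obtain ⟨γ, ⟨hγα, hne⟩, hmin⟩ :=
    wellFounded_lt.has_min {γ | γ < α ∧ σ γ ≠ σ' γ} (by simpa [EqOn, Set.Nonempty] using h)
  exact ⟨γ, hγα, node_separated hreg hsplit
    (fun ξ hξ => by_contra fun hne' => hmin ξ ⟨hξ.trans hγα, hne'⟩ hξ) hne⟩

theorem two_pow_mk_Iio_le_mk_level (hreg : κ.IsRegular) (hsplit : StableNodesSplit r)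
    {T : Set (PreFun κ)} (hrange : range r ⊆ branches κ T) {α δ : K κ}
    (hδ : ∀ σ, ∀ ξ < α, (node r σ ξ).height ≤ δ) : 2 ^ #(Iio α) ≤ #(level κ T δ) := by
  let ext : (Iio α → Bool) → K κ → Bool := fun τ => Function.extend Subtype.val τ fun _ => false
  have hext : ∀ τ (ξ : Iio α), ext τ ξ = τ ξ := fun τ ξ =>
    Subtype.val_injective.extend_apply _ _ _
  let F : (Iio α → Bool) → level κ T δ := fun τ =>
    ⟨resT κ (r (gluedNode r (ext τ) α).point) δ, hrange ⟨_, rfl⟩ δ, rfl⟩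
  suffices hF : Function.Injective F by simpa using mk_le_of_injective hF
  intro τ τ' hF
  by_contra hne
  have hτ : ¬ EqOn (ext τ) (ext τ') (Iio α) := fun h =>
    hne (funext fun ξ => (hext τ ξ).symm.trans ((h ξ.2).trans (hext τ' ξ)))
  obtain ⟨γ, hγ, hsep⟩ := exists_node_separated hreg hsplit hτ
  exact hsep.not_eqOn (apply_gluedNode_mem_cyl hreg hsplit hγ)
    (apply_gluedNode_mem_cyl hreg hsplit hγ) (hδ _ γ hγ)
    (resT_eq_resT_iff.1 (congrArg Subtype.val hF))

lemma bddAbove_range_height_node (hreg : κ.IsRegular) {β : K κ} (hβ : 2 ^ #(Iic β) < κ) :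
    BddAbove (range fun σ => (node r σ β).height) := by
  let ext : (Iic β → Bool) → K κ → Bool := fun τ => Function.extend Subtype.val τ fun _ => false
  refine (bddAbove_of_mk_lt hreg (mk_range_le (f := fun τ => (node r (ext τ) β).height)
    |>.trans_lt (by simpa using hβ))).mono ?_
  rintro _ ⟨σ, rfl⟩
  exact ⟨fun ξ => σ ξ, congrArg Node.height
    (node_congr fun ξ hξ => Subtype.val_injective.extend_apply _ _ ⟨ξ, hξ⟩)⟩

lemma exists_forall_height_node_le (hreg : κ.IsRegular) {α : K κ}
    (h : ∀ ξ < α, 2 ^ #(Iic ξ) < κ) : ∃ δ, ∀ σ, ∀ ξ < α, (node r σ ξ).height ≤ δ := by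
  choose b hb using fun ξ : Iio α => bddAbove_range_height_node (r := r) hreg (h ξ ξ.2)
  obtain ⟨δ, hδ⟩ := bddAbove_range_Iio hreg b
  exact ⟨δ, fun σ ξ hξ => (hb ⟨ξ, hξ⟩ ⟨σ, rfl⟩).trans (hδ ⟨⟨ξ, hξ⟩, rfl⟩)⟩

/-- Let `κ` be an uncountable regular cardinal and let `T` be a
`κ`-Kurepa subtree of `^{<κ}κ` such that either `κ` is not inaccessible or `T` is
stationary slim.  If `[T]` is a retract of `^κκ`, then `[T]` contains an isolated
point. -/
theorem isolated_point_of_retract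
    (κ : Cardinal.{u}) (hκ : ℵ₀ < κ) (hreg : κ.IsRegular)
    (T : Set (PreFun κ)) (hT : IsKurepa κ T)
    (hcase : ¬ κ.IsInaccessible ∨ StatSlim κ T)
    (hret : IsRetract κ (branches κ T)) :
    ∃ y, IsIsolatedIn κ (branches κ T) y := by
  by_contra! hniso
  obtain ⟨r, hr, hrange, hid⟩ := hret
  have hsplit := stableNodesSplit_of_forall_not_isIsolatedIn hκ hreg hr hrange hid hniso
  by_cases hin : κ.IsInaccessible
  · choose g hg using fun β => bddAbove_range_height_node (r := r) hreg (two_pow_mk_Iic_lt hin β)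
    obtain ⟨δ, hδS, hδ⟩ := hcase.resolve_left (not_not_intro hin) _
      (closedIn_setOf_forall_lt_le g) (unboundedIn_setOf_forall_lt_le hκ hreg g)
    have hcount := two_pow_mk_Iio_le_mk_level hreg hsplit hrange
      fun σ ξ hξ => (hg ξ ⟨σ, rfl⟩).trans (hδ ξ hξ)
    exact (cantor _).not_ge (hcount.trans hδS)
  · obtain ⟨α, hκα, hα⟩ := exists_le_two_pow_mk_Iio hκ hreg hin
    obtain ⟨δ, hδ⟩ := exists_forall_height_node_le (r := r) hreg hα
    exact (hT.2.1 δ).2.not_ge (hκα.trans (two_pow_mk_Iio_le_mk_level hreg hsplit hrange hδ))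

end GBaire
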